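/- Let d ≥ 2 be a natural number, C a natural-number constant, and T : ℕ → ℕ a function satisfying T(u) ≤ d · T(⌊u/d⌋) + C · u for all u ≥ 1. Then T(u) ∈ O(u · log u); that is, there exist constants c and M such that for all u ≥ max c 2, T(u) ≤ M · u · Nat.log 2 u. -/

import Mathlib

/-!
Unfolding the recurrence `log_d u` times, every level of the recursion tree costs at most `C·u`,
and the leaves (arguments below `d`) cost at most `d·T 0 + C·u` each. Concretely, strong induction
on `u` gives `T u ≤ (d·T 0 + C)·u·(log_d u + 1)`, and `log_d u + 1 ≤ 2·log₂ u` once `u ≥ 2`.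
-/

theorem le_mul_mul_log_add_one_of_le_mul_div_add {d C : ℕ} (hd : 1 < d) {T : ℕ → ℕ}
    (hT : ∀ u, 1 ≤ u → T u ≤ d * T (u / d) + C * u) {u : ℕ} (hu : 1 ≤ u) :
    T u ≤ (d * T 0 + C) * u * (Nat.log d u + 1) := by
  set K := d * T 0 + C
  induction u using Nat.strong_induction_on with
  | _ u ih =>
    rcases lt_or_ge u d with hud | hud
    · calc T u ≤ d * T 0 + C * u := by simpa [Nat.div_eq_of_lt hud] using hT u hu
        _ ≤ d * T 0 * u + C * u := Nat.add_le_add_right (Nat.le_mul_of_pos_right _ hu) _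
        _ = K * u := (Nat.add_mul _ _ _).symm
        _ ≤ K * u * (Nat.log d u + 1) := Nat.le_mul_of_pos_right _ (Nat.succ_pos _)
    · have hdiv_lt : u / d < u := Nat.div_lt_self hu hd
      have hdiv_pos : 1 ≤ u / d := (Nat.one_le_div_iff (by omega)).mpr hud
      have hlog : Nat.log d u = Nat.log d (u / d) + 1 := Nat.log_of_one_lt_of_le hd hud
      calc T u ≤ d * T (u / d) + C * u := hT u hu
        _ ≤ d * (K * (u / d) * Nat.log d u) + C * u := by
            rw [hlog]; gcongr; exact ih _ hdiv_lt hdiv_pos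
        _ = K * (d * (u / d)) * Nat.log d u + C * u := by ring
        _ ≤ K * u * Nat.log d u + K * u := by
            gcongr
            · exact Nat.mul_div_le u d
            · exact Nat.le_add_left C _
        _ = K * u * (Nat.log d u + 1) := by ring

theorem Nat.log_add_one_le_two_mul_log_two {b n : ℕ} (hb : 2 ≤ b) (hn : 2 ≤ n) :
    Nat.log b n + 1 ≤ 2 * Nat.log 2 n := by
  have hle : Nat.log b n ≤ Nat.log 2 n := Nat.log_anti_left one_lt_two hb
  have hpos : 0 < Nat.log 2 n := Nat.log_pos one_lt_two hn
  omega

/-- Master Theorem instantiation (Table 1, row 2): the recurrence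
`T(u) ≤ d·T(⌊u/d⌋) + C·u` with `d ≥ 2` yields the bound `O(u log u)`. -/
theorem master_div_linear (d C : ℕ) (hd : 2 ≤ d) (T : ℕ → ℕ)
    (hT : ∀ u, 1 ≤ u → T u ≤ d * T (u / d) + C * u) :
    ∃ c M : ℕ, ∀ u, max c 2 ≤ u → T u ≤ M * u * Nat.log 2 u := by
  refine ⟨2, 2 * (d * T 0 + C), fun u hu => ?_⟩
  have hu2 : 2 ≤ u := le_of_max_le_right hu
  calc T u ≤ (d * T 0 + C) * u * (Nat.log d u + 1) :=
        le_mul_mul_log_add_one_of_le_mul_div_add hd hT (by omega)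
    _ ≤ (d * T 0 + C) * u * (2 * Nat.log 2 u) := by
        gcongr; exact Nat.log_add_one_le_two_mul_log_two hd hu2
    _ = 2 * (d * T 0 + C) * u * Nat.log 2 u := by ring
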